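/- arXiv:2212.09965 — 3 statements merged into one kernel-verified Lean document; each statement's English description precedes it below -/
import Mathlib

section
/- Let x and y be real numbers with 2y − 1 ≠ 0 and x + y + k ≠ 0 for every natural number k. Assume that the series A = ∑_{k=0}^∞ (x)_k (x+1)_k / ((x+y)_k (x+y+1)_k) and B = ∑_{k=0}^∞ (x)_k (x+1)_k / ((x+y+1)_k (x+y+2)_k) both converge (are summable). Then A = (2x+3y−1)/(2(2y−1)) + ((y−1)·y·(y+1))/(2(2y−1)(x+y)(x+y+1)) · B. -/
/-- The rising factorial (Pochhammer symbol) `(a)_n = a (a+1) ⋯ (a+n-1)`. -/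
noncomputable def poch (a : ℝ) (n : ℕ) : ℝ := ∏ i ∈ Finset.range n, (a + i)

lemma poch_succ (a : ℝ) (n : ℕ) : poch a (n + 1) = poch a n * (a + n) :=
  Finset.prod_range_succ _ _

lemma poch_zero (a : ℝ) : poch a 0 = 1 := Finset.prod_range_zero _

lemma poch_shift (a : ℝ) (n : ℕ) : a * poch (a + 1) n = poch a n * (a + n) := by
  have h2 := Finset.prod_range_succ' (fun i : ℕ => a + i) n
  have h1 := Finset.prod_range_succ (fun i : ℕ => a + i) n
  unfold poch
  rw [← h1, h2]
  push_cast
  rw [mul_comm]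
  congr 1
  · apply Finset.prod_congr rfl
    intro i _
    push_cast
    ring
  · norm_num

lemma poch_ne_zero {a : ℝ} (h : ∀ i : ℕ, a + i ≠ 0) (n : ℕ) : poch a n ≠ 0 :=
  Finset.prod_ne_zero_iff.mpr fun i _ => h i

set_option maxHeartbeats 1600000 in
lemma key1 (x y : ℝ) (k : ℕ) (hy : 2 * y - 1 ≠ 0)
    (h0 : x + y ≠ 0) (h1 : x + y + 1 ≠ 0)
    (hk : x + y + (k:ℝ) ≠ 0) (hk1 : x + y + 1 + (k:ℝ) ≠ 0)
    (hP : poch (x + y) k ≠ 0)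
    (hR_eq : poch (x + y + 2) k = poch (x + y + 1) k * (x + y + 1 + k) / (x + y + 1))
    (hQ_eq : poch (x + y + 1) k = poch (x + y) k * (x + y + k) / (x + y)) :
    poch x k * poch (x + 1) k / (poch (x + y) k * poch (x + y + 1) k)
      - ((y - 1) * y * (y + 1) / (2 * (2 * y - 1) * (x + y) * (x + y + 1)))
         * (poch x k * poch (x + 1) k / (poch (x + y + 1) k * poch (x + y + 2) k))
    = (1 / (2 * y - 1) * k + (2 * x + 3 * y - 1) / (2 * (2 * y - 1)))
        * (poch x k * poch (x + 1) k / (poch (x + y) k * poch (x + y + 1) k))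
      - (1 / (2 * y - 1) * (k + 1 : ℕ) + (2 * x + 3 * y - 1) / (2 * (2 * y - 1)))
        * (poch x (k + 1) * poch (x + 1) (k + 1)
            / (poch (x + y) (k + 1) * poch (x + y + 1) (k + 1))) := by
  rw [poch_succ x k, poch_succ (x + 1) k, poch_succ (x + y) k, poch_succ (x + y + 1) k,
    hR_eq, hQ_eq]
  push_cast
  have hy2 : y * 2 - 1 ≠ 0 := by rw [mul_comm]; exact hy
  field_simp
  ring

set_option maxHeartbeats 800000 in
/-- The ₃F₂(1) recurrence of Theorem 1. -/
theorem stmt_1 (x y : ℝ) (hy : 2 * y - 1 ≠ 0) (hxy : ∀ k : ℕ, x + y + k ≠ 0)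
    (hA : Summable fun k : ℕ =>
      poch x k * poch (x + 1) k / (poch (x + y) k * poch (x + y + 1) k))
    (hB : Summable fun k : ℕ =>
      poch x k * poch (x + 1) k / (poch (x + y + 1) k * poch (x + y + 2) k)) :
    (∑' k : ℕ, poch x k * poch (x + 1) k / (poch (x + y) k * poch (x + y + 1) k))
      = (2 * x + 3 * y - 1) / (2 * (2 * y - 1))
        + ((y - 1) * y * (y + 1)) / (2 * (2 * y - 1) * (x + y) * (x + y + 1))
          * ∑' k : ℕ, poch x k * poch (x + 1) k
              / (poch (x + y + 1) k * poch (x + y + 2) k) := by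
  set a := fun k : ℕ => poch x k * poch (x + 1) k / (poch (x + y) k * poch (x + y + 1) k)
    with ha
  set b := fun k : ℕ => poch x k * poch (x + 1) k / (poch (x + y + 1) k * poch (x + y + 2) k)
    with hb
  set p := 1 / (2 * y - 1) with hpdef
  set q := (2 * x + 3 * y - 1) / (2 * (2 * y - 1)) with hqdef
  set D := ((y - 1) * y * (y + 1)) / (2 * (2 * y - 1) * (x + y) * (x + y + 1)) with hDdef
  set t := fun n : ℕ => (p * n + q) * a n with htdef
  have h0 : x + y ≠ 0 := by simpa using hxy 0
  have h1 : x + y + 1 ≠ 0 := by simpa using hxy 1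
  have hQne : ∀ i : ℕ, x + y + 1 + (i : ℝ) ≠ 0 := by
    intro i
    have := hxy (i + 1)
    push_cast at this
    intro h; exact this (by linarith)
  -- key telescoping identity
  have key : ∀ k : ℕ, a k - D * b k = t k - t (k + 1) := by
    intro k
    have hk : x + y + (k : ℝ) ≠ 0 := hxy k
    have hk1 : x + y + 1 + (k : ℝ) ≠ 0 := hQne k
    have hP : poch (x + y) k ≠ 0 := poch_ne_zero (fun i => hxy i) k
    have hQ : poch (x + y + 1) k ≠ 0 := poch_ne_zero hQne k
    have eQ : (x + y) * poch (x + y + 1) k = poch (x + y) k * (x + y + k) := poch_shift (x + y) k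
    have eR : (x + y + 1) * poch (x + y + 2) k = poch (x + y + 1) k * (x + y + 1 + k) := by
      have := poch_shift (x + y + 1) k
      rw [show x + y + 1 + 1 = x + y + 2 by ring] at this
      exact this
    have hR_eq : poch (x + y + 2) k = poch (x + y + 1) k * (x + y + 1 + k) / (x + y + 1) := by
      rw [eq_div_iff h1]; linear_combination eR
    have hQ_eq : poch (x + y + 1) k = poch (x + y) k * (x + y + k) / (x + y) := by
      rw [eq_div_iff h0]; linear_combination eQ
    simp only [htdef, ha, hb, hDdef, hpdef, hqdef]
    exact key1 x y k hy h0 h1 hk hk1 hP hR_eq hQ_eq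
  have hDb : Summable (fun k => D * b k) := hB.mul_left D
  have hc : Summable (fun k => a k - D * b k) := hA.sub hDb
  set S := ∑' k, (a k - D * b k) with hSdef
  have hsum : Filter.Tendsto (fun n => ∑ i ∈ Finset.range n, (a i - D * b i))
      Filter.atTop (nhds S) := hc.hasSum.tendsto_sum_nat
  have heq : ∀ n, ∑ i ∈ Finset.range n, (a i - D * b i) = t 0 - t n := by
    intro n
    rw [Finset.sum_congr rfl fun i _ => key i, Finset.sum_range_sub' t n]
  have htn : Filter.Tendsto t Filter.atTop (nhds (t 0 - S)) := by
    have h2 : Filter.Tendsto (fun n => t 0 - ∑ i ∈ Finset.range n, (a i - D * b i))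
        Filter.atTop (nhds (t 0 - S)) := tendsto_const_nhds.sub hsum
    refine h2.congr fun n => ?_
    rw [heq n]; ring
  have hp : p ≠ 0 := one_div_ne_zero hy
  have ha0 : Filter.Tendsto a Filter.atTop (nhds 0) := hA.tendsto_atTop_zero
  set L := t 0 - S with hLdef
  have hna : Filter.Tendsto (fun n : ℕ => (n : ℝ) * a n) Filter.atTop (nhds (L / p)) := by
    have h3 : Filter.Tendsto (fun n => (t n - q * a n) / p) Filter.atTop
        (nhds ((L - q * 0) / p)) := (htn.sub (ha0.const_mul q)).div_const p
    rw [mul_zero, sub_zero] at h3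
    refine h3.congr fun n => ?_
    rw [htdef]
    field_simp
    ring
  have hL : L = 0 := by
    by_contra hL0
    have hc0 : L / p ≠ 0 := div_ne_zero hL0 hp
    have hcpos : 0 < |L / p| := abs_pos.mpr hc0
    have habs : Filter.Tendsto (fun n : ℕ => |(n : ℝ) * a n|) Filter.atTop (nhds |L / p|) :=
      hna.abs
    have hev : ∀ᶠ n : ℕ in Filter.atTop, |L / p| / 2 ≤ |(n : ℝ) * a n| :=
      habs.eventually (eventually_ge_nhds (half_lt_self hcpos))
    obtain ⟨N, hN⟩ := Filter.eventually_atTop.mp hev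
    have hsa : Summable (fun n => |a n|) := hA.abs
    have h4 : Summable (fun n : ℕ => |a (n + (N + 1))|) :=
      (summable_nat_add_iff (N + 1)).mpr hsa
    have h5 : Summable (fun n : ℕ => |L / p| / 2 * (1 / (((n + (N + 1) : ℕ)) : ℝ))) := by
      apply Summable.of_nonneg_of_le (fun n => by positivity) _ h4
      intro n
      have hm : (0 : ℝ) < ((n + (N + 1) : ℕ) : ℝ) := by positivity
      have hle := hN (n + (N + 1)) (by omega)
      rw [abs_mul, Nat.abs_cast] at hle
      rw [mul_one_div, div_le_iff₀ hm]
      calc |L / p| / 2 ≤ ((n + (N + 1) : ℕ) : ℝ) * |a (n + (N + 1))| := hle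
        _ = |a (n + (N + 1))| * ((n + (N + 1) : ℕ) : ℝ) := by ring
    have h6 : Summable (fun n : ℕ => 1 / (((n + (N + 1) : ℕ)) : ℝ)) :=
      (summable_mul_left_iff (by positivity : |L / p| / 2 ≠ 0)).mp h5
    have h7 : Summable (fun n : ℕ => 1 / ((n : ℕ) : ℝ)) :=
      (summable_nat_add_iff (N + 1)).mp h6
    exact Real.not_summable_one_div_natCast h7
  have ht0 : t 0 = q := by
    rw [htdef]; simp [ha, poch_zero]
  have hSval : S = q := by
    have : t 0 - S = 0 := hL
    rw [ht0] at this; linarith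
  have hsplit : S = (∑' k, a k) - D * ∑' k, b k := by
    rw [hSdef, hA.tsum_sub hDb, tsum_mul_left]
  rw [hsplit] at hSval
  linarith
end

section
/- π = −2·∑_{n=0}^∞ (1/16)^n · C(2n,n) · (6n+5) / ((2n+3)(2n+1)(2n−1)). -/
open Set MeasureTheory intervalIntegral

noncomputable def aa (n : ℕ) : ℝ := (Nat.choose (2 * n) n : ℝ) / 4 ^ n
lemma aa_nonneg (n : ℕ) : 0 ≤ aa n := by
  unfold aa; positivity
lemma choose_le_four_pow (n : ℕ) : Nat.choose (2 * n) n ≤ 4 ^ n := by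
  have h : Nat.choose (2 * n) n ≤ ∑ m ∈ Finset.range (2 * n + 1), Nat.choose (2 * n) m :=
    Finset.single_le_sum (fun i _ => Nat.zero_le _) (by simp [Nat.lt_succ]; omega)
  calc Nat.choose (2 * n) n ≤ 2 ^ (2 * n) := by rw [← Nat.sum_range_choose]; exact h
    _ = 4 ^ n := by rw [pow_mul]; norm_num
lemma aa_le_one (n : ℕ) : aa n ≤ 1 := by
  unfold aa
  rw [div_le_one (by positivity)]
  exact_mod_cast choose_le_four_pow n
lemma aa_succ (n : ℕ) : 2 * ((n : ℝ) + 1) * aa (n + 1) = (2 * n + 1) * aa n := by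
  have h := Nat.succ_mul_centralBinom_succ n
  have h' : ((n + 1) * Nat.centralBinom (n + 1) : ℝ) = (2 * (2 * n + 1) * Nat.centralBinom n : ℝ) := by
    exact_mod_cast congrArg (Nat.cast : ℕ → ℝ) h
  unfold aa
  unfold Nat.centralBinom at h'
  have h4 : (4 : ℝ) ^ (n + 1) = 4 * 4 ^ n := by ring
  field_simp [h4] at h' ⊢
  push_cast at h' ⊢
  linear_combination 2 * (4:ℝ)^n * h'

/-- the summable bound for the derivative series -/
lemma u_summable : Summable (fun n : ℕ => (8/3 : ℝ) * n * (9/16) ^ n) := by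
  have h : Summable (fun n : ℕ => (n : ℝ) ^ 1 * (9/16) ^ n) :=
    summable_pow_mul_geometric_of_norm_lt_one 1 (by rw [Real.norm_eq_abs]; rw [abs_of_nonneg] <;> norm_num)
  have := h.mul_left (8/3 : ℝ)
  refine this.congr fun n => by ring
lemma deriv_bound (n : ℕ) {y : ℝ} (hy : y ∈ Ioo (-(3/4) : ℝ) (3/4)) :
    ‖aa n * (2 * n * y ^ (2 * n - 1))‖ ≤ (8/3 : ℝ) * n * (9/16) ^ n := by
  obtain ⟨h1, h2⟩ := hy
  have hyle : |y| ≤ 3/4 := abs_le.2 ⟨by linarith, by linarith⟩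
  match n with
  | 0 => simp
  | (k+1) =>
    have hm : 2 * (k + 1) - 1 = 2 * k + 1 := by omega
    have h34 : (3/4 : ℝ) ^ (2 * k + 1) = 4/3 * (9/16) ^ (k+1) := by
      have h9 : ((9:ℝ)/16) ^ (k+1) = ((3/4:ℝ)^2) ^ (k+1) := by norm_num
      rw [h9, ← pow_mul, show 2*(k+1) = (2*k+1)+1 by omega, pow_succ]
      ring
    have hpow : |y| ^ (2 * k + 1) ≤ (4/3 : ℝ) * (9/16) ^ (k+1) := by
      rw [← h34]
      exact pow_le_pow_left₀ (abs_nonneg y) hyle _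
    have haa : |aa (k+1)| ≤ 1 := by rw [abs_of_nonneg (aa_nonneg _)]; exact aa_le_one _
    rw [hm, norm_mul, norm_mul, Real.norm_eq_abs, Real.norm_eq_abs, Real.norm_eq_abs, abs_pow]
    have h2k : |2 * ((k+1 : ℕ) : ℝ)| = 2 * ((k:ℝ) + 1) := by
      rw [abs_of_nonneg (by positivity)]
      push_cast
      ring
    rw [h2k]
    have key : |aa (k+1)| * (2 * ((k:ℝ)+1) * |y| ^ (2*k+1))
        ≤ 1 * (2 * ((k:ℝ)+1) * ((4/3) * (9/16) ^ (k+1))) := by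
      apply mul_le_mul haa _ (by positivity) (by norm_num)
      exact mul_le_mul_of_nonneg_left hpow (by positivity)
    calc |aa (k+1)| * (2 * ((k:ℝ)+1) * |y| ^ (2*k+1))
        ≤ 1 * (2 * ((k:ℝ)+1) * ((4/3) * (9/16) ^ (k+1))) := key
      _ = (8/3 : ℝ) * ((k+1 : ℕ) : ℝ) * (9/16) ^ (k+1) := by push_cast; ring
lemma summable_A {y : ℝ} (hy : |y| ≤ 3/4) : Summable (fun n : ℕ => aa n * y ^ (2 * n)) := by
  apply Summable.of_norm
  apply Summable.of_nonneg_of_le (fun n => norm_nonneg _) (fun n => ?_)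
    (summable_geometric_of_lt_one (by norm_num) (by norm_num : (9/16:ℝ) < 1))
  rw [norm_mul, Real.norm_eq_abs, Real.norm_eq_abs, abs_pow]
  have h1 : |aa n| ≤ 1 := by rw [abs_of_nonneg (aa_nonneg _)]; exact aa_le_one _
  have h2 : |y| ^ (2*n) ≤ (9/16 : ℝ) ^ n := by
    calc |y| ^ (2*n) ≤ (3/4 : ℝ) ^ (2*n) := pow_le_pow_left₀ (abs_nonneg y) hy _
      _ = (9/16 : ℝ) ^ n := by rw [pow_mul]; norm_num
  calc |aa n| * |y|^(2*n) ≤ 1 * (9/16:ℝ)^n :=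
        mul_le_mul h1 h2 (by positivity) (by norm_num)
    _ = (9/16:ℝ)^n := one_mul _
noncomputable def AA (z : ℝ) : ℝ := ∑' n : ℕ, aa n * z ^ (2 * n)
noncomputable def DD (y : ℝ) : ℝ := ∑' n : ℕ, aa n * (2 * n * y ^ (2 * n - 1))
lemma hasDerivAt_AA {y : ℝ} (hy : y ∈ Ioo (-(3/4) : ℝ) (3/4)) :
    HasDerivAt AA (DD y) y := by
  have hg : ∀ (n : ℕ) (z : ℝ), z ∈ Ioo (-(3/4) : ℝ) (3/4) →
      HasDerivAt (fun z : ℝ => aa n * z ^ (2 * n)) (aa n * (2 * n * z ^ (2 * n - 1))) z := by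
    intro n z _
    have := (hasDerivAt_pow (2*n) z).const_mul (aa n)
    refine this.congr_deriv ?_
    push_cast
    ring
  have h00 : Summable (fun n : ℕ => aa n * (0:ℝ) ^ (2 * n)) := by
    apply summable_of_ne_finset_zero (s := {0})
    intro n hn
    simp only [Finset.mem_singleton] at hn
    have : 2 * n ≠ 0 := by omega
    simp [zero_pow this]
  exact hasDerivAt_tsum_of_isPreconnected u_summable isOpen_Ioo
    (convex_Ioo _ _).isPreconnected hg (fun n z hz => deriv_bound n hz)
    (by constructor <;> norm_num : (0:ℝ) ∈ Ioo (-(3/4):ℝ) (3/4)) h00 hy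
lemma summable_D {y : ℝ} (hy : y ∈ Ioo (-(3/4) : ℝ) (3/4)) :
    Summable (fun n : ℕ => aa n * (2 * n * y ^ (2 * n - 1))) :=
  Summable.of_norm (u_summable.of_nonneg_of_le (fun n => norm_nonneg _)
    (fun n => deriv_bound n hy))
lemma DD_eq {y : ℝ} (hy : y ∈ Ioo (-(3/4) : ℝ) (3/4)) :
    (1 - y^2) * DD y = y * AA y := by
  have hyabs : |y| ≤ 3/4 := by
    obtain ⟨h1, h2⟩ := hy; exact abs_le.2 ⟨by linarith, by linarith⟩
  have hsD := summable_D hy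
  have hsA := summable_A hyabs
  -- shift the derivative series
  have h0 : DD y = ∑' n : ℕ, aa (n+1) * (2 * (n+1) * y ^ (2 * (n+1) - 1)) := by
    rw [DD, Summable.tsum_eq_zero_add hsD]
    push_cast
    simp
  have hterm : ∀ n : ℕ, aa (n+1) * (2 * ((n:ℝ)+1) * y ^ (2 * (n+1) - 1))
      = (2 * n + 1) * aa n * y ^ (2*n+1) := by
    intro n
    have h1 : 2 * (n+1) - 1 = 2*n+1 := by omega
    rw [h1]
    have := aa_succ n
    linear_combination y ^ (2*n+1) * this
  have h1 : DD y = ∑' n : ℕ, (2 * (n:ℝ) + 1) * aa n * y ^ (2*n+1) := by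
    rw [h0]
    exact tsum_congr fun n => hterm n
  have hsD' : Summable (fun n : ℕ => (2 * (n:ℝ) + 1) * aa n * y ^ (2*n+1)) := by
    have := (summable_nat_add_iff 1).2 hsD
    apply this.congr
    intro n
    rw [← hterm n]
    push_cast
    ring
  -- split (2n+1) = 1 + 2n
  have hsplit : ∀ n : ℕ, (2 * (n:ℝ) + 1) * aa n * y ^ (2*n+1)
      = y * (aa n * y ^ (2*n)) + y^2 * (aa n * (2 * n * y ^ (2*n-1))) := by
    intro n
    match n with
    | 0 => simp; ring
    | (k+1) =>
      have h2 : 2*(k+1)+1 = (2*(k+1)-1) + 2 := by omega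
      have h3 : 2*(k+1) = (2*(k+1)-1) + 1 := by omega
      rw [h2, h3]
      push_cast
      ring
  have hE : (∑' n : ℕ, (2 * (n:ℝ) + 1) * aa n * y ^ (2*n+1)) = y * AA y + y^2 * DD y := by
    calc (∑' n : ℕ, (2 * (n:ℝ) + 1) * aa n * y ^ (2*n+1))
        = ∑' n : ℕ, (y * (aa n * y ^ (2*n)) + y^2 * (aa n * (2 * n * y ^ (2*n-1)))) :=
          tsum_congr hsplit
      _ = (∑' n : ℕ, y * (aa n * y ^ (2*n))) + ∑' n : ℕ, y^2 * (aa n * (2 * n * y ^ (2*n-1))) :=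
          Summable.tsum_add (hsA.mul_left y) (hsD.mul_left (y^2))
      _ = y * AA y + y^2 * DD y := by rw [tsum_mul_left, tsum_mul_left]; rfl
  have h2 : DD y = y * AA y + y^2 * DD y := h1.trans hE
  linear_combination h2

lemma sqrt_pos_of_mem {y : ℝ} (hy : y ∈ Ioo (-(3/4) : ℝ) (3/4)) :
    0 < Real.sqrt (1 - y^2) := by
  apply Real.sqrt_pos.2
  obtain ⟨h1, h2⟩ := hy
  nlinarith
lemma hasDerivAt_sqrt_one_sub_sq {y : ℝ} (hy : 1 - y^2 ≠ 0) :
    HasDerivAt (fun z : ℝ => Real.sqrt (1 - z^2)) (-y / Real.sqrt (1 - y^2)) y := by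
  have h1 : HasDerivAt (fun z : ℝ => 1 - z^2) (-(2*y)) y := by
    simpa using ((hasDerivAt_pow 2 y).const_sub 1)
  have h2 := (Real.hasDerivAt_sqrt hy).comp y h1
  refine h2.congr_deriv ?_
  field_simp
lemma K_deriv_zero {y : ℝ} (hy : y ∈ Ioo (-(3/4) : ℝ) (3/4)) :
    HasDerivAt (fun z : ℝ => AA z * Real.sqrt (1 - z^2)) 0 y := by
  have hs := sqrt_pos_of_mem hy
  have hne : 1 - y^2 ≠ 0 := by nlinarith [Real.sq_sqrt (by nlinarith [hy.1, hy.2] : (0:ℝ) ≤ 1 - y^2)]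
  have h := (hasDerivAt_AA hy).mul (hasDerivAt_sqrt_one_sub_sq hne)
  refine h.congr_deriv ?_
  have hsq : Real.sqrt (1 - y^2) ^ 2 = 1 - y^2 :=
    Real.sq_sqrt (by nlinarith [hy.1, hy.2])
  have hD := DD_eq hy
  field_simp
  linear_combination DD y * hsq + hD
lemma AA_zero : AA 0 = 1 := by
  rw [AA, tsum_eq_single 0]
  · simp [aa]
  · intro n hn
    have : 2 * n ≠ 0 := by omega
    simp [zero_pow this]
lemma AA_eq {z : ℝ} (hz : z ∈ Icc (0:ℝ) (1/2)) :
    AA z = 1 / Real.sqrt (1 - z^2) := by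
  have hmem : z ∈ Ioo (-(3/4) : ℝ) (3/4) := by
    obtain ⟨h1, h2⟩ := hz; constructor <;> linarith
  have h0mem : (0:ℝ) ∈ Ioo (-(3/4) : ℝ) (3/4) := by constructor <;> norm_num
  have hK : ∀ x ∈ Ioo (-(3/4) : ℝ) (3/4),
      HasDerivWithinAt (fun z : ℝ => AA z * Real.sqrt (1 - z^2)) 0 (Ioo (-(3/4) : ℝ) (3/4)) x :=
    fun x hx => (K_deriv_zero hx).hasDerivWithinAt
  have hbd : ∀ x ∈ Ioo (-(3/4) : ℝ) (3/4), ‖(0:ℝ)‖ ≤ 0 := fun x _ => by simp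
  have hle := Convex.norm_image_sub_le_of_norm_hasDerivWithin_le (f' := fun _ => (0:ℝ))
    hK hbd (convex_Ioo _ _) h0mem hmem
  rw [zero_mul] at hle
  have heq : AA z * Real.sqrt (1 - z^2) = AA 0 * Real.sqrt (1 - 0^2) := by
    have := norm_le_zero_iff.1 hle
    have := sub_eq_zero.1 this
    linarith [this]
  rw [AA_zero] at heq
  simp at heq
  have hs : 0 < Real.sqrt (1 - z^2) := sqrt_pos_of_mem hmem
  rw [eq_div_iff (ne_of_gt hs)]
  linarith [heq]

/-- Swap tsum and integral for nonneg power series terms on (0, 1/2]. -/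
lemma swap_sum_int (b : ℕ → ℝ) (hb0 : ∀ n, 0 ≤ b n) (hb1 : ∀ n, b n ≤ 1) (k : ℕ) :
    HasSum (fun n : ℕ => b n * ((1/2 : ℝ) ^ (2*n+k+1) / (2*n+k+1)))
      (∫ z in Ioc (0:ℝ) (1/2), ∑' n : ℕ, b n * z ^ (2*n+k)) := by
  have hInt : ∀ n : ℕ, Integrable (fun z : ℝ => b n * z ^ (2*n+k))
      (volume.restrict (Ioc (0:ℝ) (1/2))) := by
    intro n
    exact (continuous_const.mul (continuous_pow _)).integrableOn_Ioc
  have hval : ∀ n : ℕ, (∫ z in Ioc (0:ℝ) (1/2), b n * z ^ (2*n+k))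
      = b n * ((1/2 : ℝ) ^ (2*n+k+1) / (2*n+k+1)) := by
    intro n
    rw [← intervalIntegral.integral_of_le (by norm_num : (0:ℝ) ≤ 1/2)]
    rw [intervalIntegral.integral_const_mul, integral_pow]
    norm_num
  have hnorm : ∀ n : ℕ, (∫ z in Ioc (0:ℝ) (1/2), ‖b n * z ^ (2*n+k)‖)
      = b n * ((1/2 : ℝ) ^ (2*n+k+1) / (2*n+k+1)) := by
    intro n
    rw [← hval n]
    apply setIntegral_congr_fun measurableSet_Ioc
    intro z hz
    dsimp only
    rw [Real.norm_eq_abs, abs_of_nonneg]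
    exact mul_nonneg (hb0 n) (pow_nonneg (le_of_lt hz.1) _)
  have hsum : Summable (fun n : ℕ => ∫ z in Ioc (0:ℝ) (1/2), ‖b n * z ^ (2*n+k)‖) := by
    apply Summable.of_nonneg_of_le
      (fun n => by rw [hnorm n]; exact mul_nonneg (hb0 n) (by positivity))
      (fun n => ?_)
      (summable_geometric_of_lt_one (by norm_num) (by norm_num : (1/4 : ℝ) < 1))
    rw [hnorm n]
    have h1 : (1/2 : ℝ) ^ (2*n+k+1) ≤ (1/2 : ℝ) ^ (2*n) :=
      pow_le_pow_of_le_one (by norm_num) (by norm_num) (by omega)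
    have h2 : (1:ℝ) ≤ 2*(n:ℝ)+(k:ℝ)+1 := by
      have := Nat.cast_nonneg (α := ℝ) n
      have := Nat.cast_nonneg (α := ℝ) k
      linarith
    calc b n * ((1/2 : ℝ) ^ (2*n+k+1) / (2*n+k+1))
        ≤ 1 * ((1/2 : ℝ) ^ (2*n) / 1) := by
          apply mul_le_mul (hb1 n) _ (by positivity) (by norm_num)
          exact div_le_div₀ (by positivity) h1 (by norm_num) h2
      _ = (1/4 : ℝ) ^ n := by rw [pow_mul]; norm_num
  have := MeasureTheory.hasSum_integral_of_summable_integral_norm hInt hsum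
  refine this.congr_fun fun n => (hval n).symm

lemma sqrt_fact {x : ℝ} (hx : x ∈ uIcc (0:ℝ) (1/2)) :
    0 < Real.sqrt (1 - x^2) ∧ Real.sqrt (1 - x^2) ^ 2 = 1 - x^2 ∧ x ≠ -1 ∧ x ≠ 1 := by
  rw [uIcc_of_le (by norm_num)] at hx
  obtain ⟨h1, h2⟩ := hx
  refine ⟨Real.sqrt_pos.2 (by nlinarith), Real.sq_sqrt (by nlinarith), by intro h; linarith, by intro h; linarith⟩
lemma hasDerivAt_sqrt_one_sub_sq' {x : ℝ} (hne : 1 - x^2 ≠ 0) :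
    HasDerivAt (fun z : ℝ => Real.sqrt (1 - z^2)) (-x / Real.sqrt (1 - x^2)) x := by
  have h1 : HasDerivAt (fun z : ℝ => 1 - z^2) (-(2*x)) x := by
    simpa using ((hasDerivAt_pow 2 x).const_sub 1)
  have h2 := (Real.hasDerivAt_sqrt hne).comp x h1
  refine h2.congr_deriv ?_
  field_simp
lemma contOn_inv_sqrt : ContinuousOn (fun z : ℝ => 1 / Real.sqrt (1 - z^2)) (uIcc (0:ℝ) (1/2)) := by
  apply ContinuousOn.div continuousOn_const
  · exact (Real.continuous_sqrt.comp (by continuity)).continuousOn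
  · intro x hx
    exact ne_of_gt (sqrt_fact hx).1
lemma sqrt34 : Real.sqrt (1 - (1/2:ℝ)^2) = Real.sqrt 3 / 2 := by
  have h : (1 - (1/2:ℝ)^2) = (Real.sqrt 3 / 2)^2 := by
    have h3 : Real.sqrt 3 ^ 2 = 3 := Real.sq_sqrt (by norm_num)
    nlinarith [h3]
  rw [h, Real.sqrt_sq (by positivity)]
lemma arcsin_half : Real.arcsin (1/2) = Real.pi / 6 := by
  rw [show (1/2 : ℝ) = Real.sin (Real.pi/6) by rw [Real.sin_pi_div_six]]
  exact Real.arcsin_sin (by linarith [Real.pi_pos]) (by linarith [Real.pi_pos])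
/-- ∫₀^{1/2} 1/√(1-z²) = π/6 -/
lemma my_integral_one : ∫ z in (0:ℝ)..(1/2), 1 / Real.sqrt (1 - z^2) = Real.pi / 6 := by
  have h := intervalIntegral.integral_eq_sub_of_hasDerivAt
    (f := Real.arcsin) (f' := fun z => 1 / Real.sqrt (1 - z^2))
    (a := (0:ℝ)) (b := 1/2) ?_ ?_
  · rw [h, arcsin_half, Real.arcsin_zero]; ring
  · intro x hx
    obtain ⟨_, _, h3, h4⟩ := sqrt_fact hx
    simpa using Real.hasDerivAt_arcsin h3 h4
  · exact contOn_inv_sqrt.intervalIntegrable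
/-- ∫₀^{1/2} z²/√(1-z²) = π/12 - √3/8 -/
lemma integral_two : ∫ z in (0:ℝ)..(1/2), z^2 / Real.sqrt (1 - z^2)
    = Real.pi / 12 - Real.sqrt 3 / 8 := by
  have h := intervalIntegral.integral_eq_sub_of_hasDerivAt
    (f := fun z => (Real.arcsin z - z * Real.sqrt (1 - z^2)) / 2)
    (f' := fun z => z^2 / Real.sqrt (1 - z^2))
    (a := (0:ℝ)) (b := 1/2) ?_ ?_
  · rw [h, arcsin_half, Real.arcsin_zero, sqrt34]
    norm_num
    ring
  · intro x hx
    obtain ⟨hpos, hsq, h3, h4⟩ := sqrt_fact hx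
    have hne : 1 - x^2 ≠ 0 := by nlinarith
    have harc := Real.hasDerivAt_arcsin h3 h4
    have hsqrt := hasDerivAt_sqrt_one_sub_sq' hne
    have hprod := (hasDerivAt_id x).mul hsqrt
    have hcomb := ((harc.sub hprod).div_const 2)
    refine hcomb.congr_deriv ?_
    field_simp
    simp only [id_eq]
    nlinarith [hsq, hpos]
  · apply ContinuousOn.intervalIntegrable
    apply ContinuousOn.div (by fun_prop)
    · exact (Real.continuous_sqrt.comp (by continuity)).continuousOn
    · intro x hx; exact ne_of_gt (sqrt_fact hx).1
/-- ∫₀^{1/2} 1/(√(1-z²)(1+√(1-z²))) = 2 - √3 -/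
lemma integral_three : ∫ z in (0:ℝ)..(1/2),
    1 / (Real.sqrt (1 - z^2) * (1 + Real.sqrt (1 - z^2))) = 2 - Real.sqrt 3 := by
  have h := intervalIntegral.integral_eq_sub_of_hasDerivAt
    (f := fun z => z / (1 + Real.sqrt (1 - z^2)))
    (f' := fun z => 1 / (Real.sqrt (1 - z^2) * (1 + Real.sqrt (1 - z^2))))
    (a := (0:ℝ)) (b := 1/2) ?_ ?_
  · rw [h, sqrt34]
    norm_num
    rw [div_eq_iff (by positivity)]
    nlinarith [Real.sq_sqrt (by norm_num : (3:ℝ) ≥ 0), Real.sqrt_nonneg 3]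
  · intro x hx
    obtain ⟨hpos, hsq, h3, h4⟩ := sqrt_fact hx
    have hne : 1 - x^2 ≠ 0 := by nlinarith
    have hsqrt := hasDerivAt_sqrt_one_sub_sq' hne
    have hden : HasDerivAt (fun z : ℝ => 1 + Real.sqrt (1 - z^2)) (-x / Real.sqrt (1 - x^2)) x :=
      hsqrt.const_add 1
    have hdenne : 1 + Real.sqrt (1 - x^2) ≠ 0 := by positivity
    have hdiv := (hasDerivAt_id x).div hden hdenne
    refine hdiv.congr_deriv ?_
    field_simp
    simp only [id_eq]
    nlinarith [hsq, hpos, Real.sqrt_nonneg (1 - x^2)]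
  · apply ContinuousOn.intervalIntegrable
    apply ContinuousOn.div continuousOn_const
    · apply ContinuousOn.mul
      · exact (Real.continuous_sqrt.comp (by continuity)).continuousOn
      · exact (continuous_const.add (Real.continuous_sqrt.comp (by continuity))).continuousOn
    · intro x hx
      have := (sqrt_fact hx).1
      positivity

noncomputable def cc (n : ℕ) : ℝ := (1 / 16 : ℝ) ^ n * (Nat.choose (2 * n) n : ℝ)
lemma Ioc_subset_Icc' : Ioc (0:ℝ) (1/2) ⊆ Icc (0:ℝ) (1/2) := Ioc_subset_Icc_self
/-- first sub-series -/
lemma hasSum_one : HasSum (fun n : ℕ => cc n / (2 * (n:ℝ) + 1)) (Real.pi / 3) := by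
  have hs := swap_sum_int aa aa_nonneg aa_le_one 0
  have hint : (∫ z in Ioc (0:ℝ) (1/2), ∑' n : ℕ, aa n * z ^ (2*n+0)) = Real.pi / 6 := by
    rw [← my_integral_one, intervalIntegral.integral_of_le (by norm_num : (0:ℝ) ≤ 1/2)]
    apply setIntegral_congr_fun measurableSet_Ioc
    intro z hz
    simp only [Nat.add_zero]
    rw [show (∑' n : ℕ, aa n * z ^ (2*n)) = AA z from rfl, AA_eq (Ioc_subset_Icc' hz)]
  rw [hint] at hs
  have := hs.mul_left 2
  have h2 : (2 : ℝ) * (Real.pi / 6) = Real.pi / 3 := by ring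
  rw [h2] at this
  apply this.congr_fun
  intro n
  simp only [Nat.cast_zero, add_zero, Nat.add_zero]
  unfold cc aa
  have h4 : ((4:ℝ)^n) ≠ 0 := by positivity
  have h2n : (2*(n:ℝ)+1) ≠ 0 := by positivity
  have hp : (1/2:ℝ)^(2*n+1) = 1/(4^n*2) := by
    rw [pow_succ, pow_mul, one_div, one_div, inv_pow, inv_pow]
    norm_num
    ring
  have h16 : (1/16:ℝ)^n = 1/(4^n*4^n) := by
    rw [one_div, inv_pow, ← mul_pow]
    norm_num
  rw [hp, h16]
  field_simp
/-- second sub-series -/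
lemma hasSum_three : HasSum (fun n : ℕ => cc n / (2 * (n:ℝ) + 3))
    (2 * Real.pi / 3 - Real.sqrt 3) := by
  have hs := swap_sum_int aa aa_nonneg aa_le_one 2
  have hint : (∫ z in Ioc (0:ℝ) (1/2), ∑' n : ℕ, aa n * z ^ (2*n+2))
      = Real.pi / 12 - Real.sqrt 3 / 8 := by
    rw [← integral_two, intervalIntegral.integral_of_le (by norm_num : (0:ℝ) ≤ 1/2)]
    apply setIntegral_congr_fun measurableSet_Ioc
    intro z hz
    dsimp only
    have hAA : AA z = 1 / Real.sqrt (1 - z^2) := AA_eq (Ioc_subset_Icc' hz)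
    have : (∑' n : ℕ, aa n * z ^ (2*n+2)) = z^2 * AA z := by
      rw [AA, ← tsum_mul_left]
      exact tsum_congr fun n => by rw [pow_add]; ring
    rw [this, hAA]
    ring
  rw [hint] at hs
  have := hs.mul_left 8
  have h2 : (8 : ℝ) * (Real.pi / 12 - Real.sqrt 3 / 8) = 2 * Real.pi / 3 - Real.sqrt 3 := by ring
  rw [h2] at this
  apply this.congr_fun
  intro n
  have h4 : ((4:ℝ)^n) ≠ 0 := by positivity
  have h2n : (2*(n:ℝ)+3) ≠ 0 := by positivity
  unfold cc aa
  have hp : (1/2:ℝ)^(2*n+2+1) = 1/(4^n*8) := by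
    rw [show 2*n+2+1 = 2*n+3 by omega, pow_add, pow_mul, one_div, one_div, inv_pow, inv_pow]
    norm_num
    ring
  have h16 : (1/16:ℝ)^n = 1/(4^n*4^n) := by
    rw [one_div, inv_pow, ← mul_pow]
    norm_num
  rw [hp, h16]
  push_cast
  rw [show (2*(n:ℝ)+2+1) = 2*(n:ℝ)+3 by ring]
  field_simp
/-- third sub-series (the 1/(2n-1) one) -/
lemma hasSum_neg : HasSum (fun n : ℕ => cc n / (2 * (n:ℝ) - 1)) (-(Real.sqrt 3) / 2) := by
  have hs := swap_sum_int (fun n => aa (n+1)) (fun n => aa_nonneg _) (fun n => aa_le_one _) 0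
  have hint : (∫ z in Ioc (0:ℝ) (1/2), ∑' n : ℕ, aa (n+1) * z ^ (2*n+0))
      = 2 - Real.sqrt 3 := by
    rw [← integral_three, intervalIntegral.integral_of_le (by norm_num : (0:ℝ) ≤ 1/2)]
    apply setIntegral_congr_fun measurableSet_Ioc
    intro z hz
    dsimp only
    obtain ⟨hz0, hz1⟩ := hz
    have hzabs : |z| ≤ 3/4 := by rw [abs_of_pos hz0]; linarith
    have hsA : Summable (fun n : ℕ => aa n * z ^ (2 * n)) := summable_A hzabs
    have hAA : AA z = 1 / Real.sqrt (1 - z^2) := AA_eq ⟨le_of_lt hz0, hz1⟩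
    set s := Real.sqrt (1 - z^2) with hs_def
    have hspos : 0 < s := Real.sqrt_pos.2 (by nlinarith)
    have hssq : s^2 = 1 - z^2 := Real.sq_sqrt (by nlinarith)
    have hzne : z ≠ 0 := ne_of_gt hz0
    -- z^2 * (∑' aa (n+1) z^(2n)) = AA z - 1
    have hshift : z^2 * (∑' n : ℕ, aa (n+1) * z ^ (2*n+0)) = AA z - 1 := by
      rw [AA, Summable.tsum_eq_zero_add hsA]
      have : aa 0 * z ^ (2*0) = 1 := by simp [aa]
      rw [this, ← tsum_mul_left]
      have : (∑' n : ℕ, z^2 * (aa (n+1) * z ^ (2*n+0)))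
          = ∑' n : ℕ, aa (n+1) * z ^ (2*(n+1)) := by
        exact tsum_congr fun n => by rw [show 2*(n+1) = 2*n+2 by omega, pow_add]; ring
      rw [this]
      ring
    have hne : z^2 ≠ 0 := pow_ne_zero _ hzne
    have : (∑' n : ℕ, aa (n+1) * z ^ (2*n+0)) = (AA z - 1) / z^2 := by
      field_simp at hshift ⊢
      linarith [hshift]
    rw [this, hAA]
    rw [div_eq_div_iff (by assumption) (by positivity)]
    have h1s : 1 + s ≠ 0 := by positivity
    field_simp
    nlinarith [hssq, hspos]
  rw [hint] at hs
  have h2 := hs.mul_left (1/2)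
  have hval : (1/2 : ℝ) * (2 - Real.sqrt 3) = 1 - Real.sqrt 3 / 2 := by ring
  rw [hval] at h2
  have h3 : HasSum (fun n : ℕ => cc (n+1) / (2 * ((n:ℝ)+1) - 1)) (1 - Real.sqrt 3 / 2) := by
    apply h2.congr_fun
    intro n
    simp only [Nat.cast_zero, add_zero, Nat.add_zero]
    unfold cc aa
    have h4 : ((4:ℝ)^n) ≠ 0 := by positivity
    have h2n : (2*((n:ℝ)+1)-1) ≠ 0 := by
      have : (0:ℝ) ≤ (n:ℝ) := Nat.cast_nonneg n
      intro h; nlinarith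
    have hp : (1/2:ℝ)^(2*n+1) = 1/(4^n*2) := by
      rw [pow_succ, pow_mul, one_div, one_div, inv_pow, inv_pow]
      norm_num
      ring
    have h16 : (1/16:ℝ)^(n+1) = 1/(4^n*4^n*16) := by
      rw [one_div, inv_pow, show (16:ℝ)^(n+1) = 16^n*16 by ring,
        show (16:ℝ)^n = 4^n*4^n by rw [← mul_pow]; norm_num]
      rw [one_div, mul_inv]
    rw [hp, h16]
    have hcast : (2*((n:ℝ)+1)) = 2*((n+1 : ℕ):ℝ) := by push_cast; ring
    push_cast
    field_simp
    ring
  have h6 : HasSum (fun n : ℕ => (fun m : ℕ => cc m / (2*(m:ℝ)-1)) (n+1)) (1 - Real.sqrt 3/2) := by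
    apply h3.congr_fun
    intro n
    push_cast
    ring
  have h7 := (hasSum_nat_add_iff (f := fun m : ℕ => cc m / (2*(m:ℝ)-1)) 1).1 h6
  have hf0 : (∑ i ∈ Finset.range 1, cc i / (2*(i:ℝ)-1)) = -1 := by
    simp [cc]
  rw [hf0] at h7
  rw [show -(Real.sqrt 3) / 2 = 1 - Real.sqrt 3 / 2 + -1 by ring]
  exact h7
lemma two_n_sub_one_ne (n : ℕ) : 2 * (n:ℝ) - 1 ≠ 0 := by
  match n with
  | 0 => norm_num
  | (k+1) =>
    have : (0:ℝ) ≤ (k:ℝ) := Nat.cast_nonneg k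
    push_cast
    intro h
    nlinarith
/-- `π = −2·∑_{n=0}^∞ (1/16)ⁿ·C(2n,n)·(6n+5)/((2n+3)(2n+1)(2n−1))`. -/
theorem stmt_6 :
    Real.pi
      = -2 * ∑' n : ℕ,
          (1 / 16 : ℝ) ^ n * (Nat.choose (2 * n) n : ℝ)
            * (6 * (n : ℝ) + 5)
            / ((2 * (n : ℝ) + 3) * (2 * (n : ℝ) + 1) * (2 * (n : ℝ) - 1)) := by
  have hT : HasSum
      (fun n : ℕ => (-1/2 : ℝ) * (cc n / (2 * (n:ℝ) + 3))
        + ((-1/2 : ℝ) * (cc n / (2 * (n:ℝ) + 1)) + cc n / (2 * (n:ℝ) - 1)))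
      ((-1/2 : ℝ) * (2 * Real.pi / 3 - Real.sqrt 3)
        + ((-1/2 : ℝ) * (Real.pi / 3) + -(Real.sqrt 3) / 2)) :=
    (hasSum_three.mul_left _).add ((hasSum_one.mul_left _).add hasSum_neg)
  have hval : ((-1/2 : ℝ) * (2 * Real.pi / 3 - Real.sqrt 3)
      + ((-1/2 : ℝ) * (Real.pi / 3) + -(Real.sqrt 3) / 2)) = -(Real.pi/2) := by ring
  rw [hval] at hT
  have hT' : HasSum
      (fun n : ℕ => (1 / 16 : ℝ) ^ n * (Nat.choose (2 * n) n : ℝ)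
            * (6 * (n : ℝ) + 5)
            / ((2 * (n : ℝ) + 3) * (2 * (n : ℝ) + 1) * (2 * (n : ℝ) - 1)))
      (-(Real.pi/2)) := by
    apply hT.congr_fun
    intro n
    unfold cc
    have d1 : (2 * (n:ℝ) + 3) ≠ 0 := by positivity
    have d2 : (2 * (n:ℝ) + 1) ≠ 0 := by positivity
    have d3 : (2 * (n:ℝ) - 1) ≠ 0 := two_n_sub_one_ne n
    have d3' : (n:ℝ) * 2 - 1 ≠ 0 := by rwa [mul_comm]
    field_simp
    ring
  rw [hT'.tsum_eq]
  ring
end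

section
/- Let x and y be real numbers with x + y + k ≠ 0 for every natural number k, and define s(x,y) = ∑_{n=0}^∞ (−1)^n (x)_n² / ((x+y)_n)². Assume all the series appearing below converge (are summable). Then both of the following hold: (i) s(x,y) = 1 − x²/(x+y)² · s(x+1,y); (ii) s(x,y) = (2x² + 6xy + 5y² + y) / (4(x+y)²) − y(y+1)³ / (4(x+y)²(x+y+1)²) · s(x,y+2). -/
/-- `s(x,y) = ∑_{n=0}^∞ (−1)ⁿ (x)_n² / ((x+y)_n)²`. -/
noncomputable def s (x y : ℝ) : ℝ :=
  ∑' n : ℕ, (-1 : ℝ) ^ n * (poch x n) ^ 2 / (poch (x + y) n) ^ 2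

open Filter Topology

theorem Summable.tsum_eq_of_eq_sub_succ {α : Type*} [AddCommGroup α] [TopologicalSpace α]
    [IsTopologicalAddGroup α] [T2Space α] {f u : ℕ → α} (hf : Summable f)
    (h : ∀ n, f n = u n - u (n + 1)) (hu : Tendsto u atTop (𝓝 0)) : ∑' n, f n = u 0 := by
  refine tendsto_nhds_unique hf.hasSum.tendsto_sum_nat ?_
  have hpartial : ∀ N, ∑ n ∈ Finset.range N, f n = u 0 - u N := fun N => by
    simp only [h, Finset.sum_range_sub']
  simpa only [hpartial, sub_zero] using (tendsto_const_nhds (x := u 0)).sub hu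

namespace poch

@[simp]
theorem zero (a : ℝ) : poch a 0 = 1 := Finset.prod_range_zero _

theorem succ (a : ℝ) (n : ℕ) : poch a (n + 1) = poch a n * (a + n) :=
  Finset.prod_range_succ _ _

theorem succ_eq_mul_add_one (a : ℝ) (n : ℕ) : poch a (n + 1) = a * poch (a + 1) n := by
  rw [poch, Finset.prod_range_succ', mul_comm]
  simp only [poch, Nat.cast_zero, add_zero, Nat.cast_succ, add_assoc, add_comm (1 : ℝ)]

end poch

noncomputable def telescopingFactor (y m : ℝ) : ℝ :=
  1 / 2 + y / 2 * m⁻¹ + y * (y + 1) / 4 * m⁻¹ ^ 2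

theorem telescopingFactor_add_one (y m : ℝ) (hm : m ≠ 0) (hm₁ : m + 1 ≠ 0) :
    telescopingFactor y m + (m - y) ^ 2 / m ^ 2 * telescopingFactor y (m + 1)
      = 1 + y * (y + 1) ^ 3 / 4 / (m ^ 2 * (m + 1) ^ 2) := by
  unfold telescopingFactor
  field_simp
  ring

theorem tendsto_telescopingFactor (y : ℝ) :
    Tendsto (telescopingFactor y) atTop (𝓝 (1 / 2)) := by
  have hc : Continuous fun t : ℝ => 1 / 2 + y / 2 * t + y * (y + 1) / 4 * t ^ 2 := by fun_prop
  convert (hc.tendsto 0).comp tendsto_inv_atTop_zero using 2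
  · rfl
  · norm_num

noncomputable def sTerm (x y : ℝ) (n : ℕ) : ℝ :=
  (-1 : ℝ) ^ n * (poch x n) ^ 2 / (poch (x + y) n) ^ 2

namespace sTerm

variable {x y : ℝ}

@[simp]
theorem zero : sTerm x y 0 = 1 := by simp [sTerm]

theorem succ (n : ℕ) :
    sTerm x y (n + 1) = -(sTerm x y n * ((x + n) ^ 2 / (x + y + n) ^ 2)) := by
  rw [sTerm, sTerm, poch.succ, poch.succ]
  generalize x + y + n = m
  ring

theorem succ_eq_mul_shift (n : ℕ) :
    sTerm x y (n + 1) = -(x ^ 2 / (x + y) ^ 2 * sTerm (x + 1) y n) := by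
  rw [sTerm, sTerm, poch.succ_eq_mul_add_one, poch.succ_eq_mul_add_one, add_right_comm x 1 y]
  generalize x + y = a
  ring

theorem div_eq_shift_div (n : ℕ) :
    sTerm x y n / ((x + y + n) ^ 2 * (x + y + n + 1) ^ 2)
      = sTerm x (y + 2) n / ((x + y) ^ 2 * (x + y + 1) ^ 2) := by
  have hleft : poch (x + y) n * (x + y + n) * (x + y + n + 1) = poch (x + y) (n + 2) := by
    rw [poch.succ, poch.succ]
    push_cast
    ring
  have hright : (x + y) * (x + y + 1) * poch (x + (y + 2)) n = poch (x + y) (n + 2) := by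
    rw [poch.succ_eq_mul_add_one, poch.succ_eq_mul_add_one]
    ring_nf
  simp only [sTerm, div_div, ← mul_pow]
  rw [← mul_assoc, hleft, mul_comm (poch (x + (y + 2)) n), hright]

theorem add_mul_div_eq_sub_succ (hxy : ∀ k : ℕ, x + y + k ≠ 0) (n : ℕ) :
    sTerm x y n + y * (y + 1) ^ 3 / 4 * (sTerm x y n / ((x + y + n) ^ 2 * (x + y + n + 1) ^ 2))
      = sTerm x y n * telescopingFactor y (x + y + n)
        - sTerm x y (n + 1) * telescopingFactor y (x + y + (n + 1 : ℕ)) := by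
  have hm₁ : x + y + n + 1 ≠ 0 := by simpa [add_assoc] using hxy (n + 1)
  have hfactor := telescopingFactor_add_one y (x + y + n) (hxy n) hm₁
  rw [sTerm.succ, show x + n = x + y + n - y by ring, Nat.cast_succ, ← add_assoc]
  generalize x + y + n = m at *
  linear_combination -(sTerm x y n) * hfactor

theorem tendsto_mul_telescopingFactor (h : Summable (sTerm x y)) :
    Tendsto (fun n : ℕ => sTerm x y n * telescopingFactor y (x + y + n)) atTop (𝓝 0) := by
  have hm : Tendsto (fun n : ℕ => x + y + n) atTop atTop :=
    tendsto_atTop_add_const_left _ _ tendsto_natCast_atTop_atTop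
  simpa using h.tendsto_atTop_zero.mul ((tendsto_telescopingFactor y).comp hm)

end sTerm

theorem s_eq_tsum_sTerm (x y : ℝ) : s x y = ∑' n, sTerm x y n := rfl

theorem s_eq_one_sub (x y : ℝ) (h : Summable (sTerm x y)) :
    s x y = 1 - x ^ 2 / (x + y) ^ 2 * s (x + 1) y := by
  simp only [s_eq_tsum_sTerm, h.tsum_eq_zero_add, sTerm.zero, sTerm.succ_eq_mul_shift,
    tsum_neg, tsum_mul_left, sub_eq_add_neg]

theorem s_eq_sub_mul_s_add_two (x y : ℝ) (hxy : ∀ k : ℕ, x + y + k ≠ 0)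
    (h : Summable (sTerm x y)) (h₂ : Summable (sTerm x (y + 2))) :
    s x y = (2 * x ^ 2 + 6 * x * y + 5 * y ^ 2 + y) / (4 * (x + y) ^ 2)
      - y * (y + 1) ^ 3 / (4 * (x + y) ^ 2 * (x + y + 1) ^ 2) * s x (y + 2) := by
  have hsum : Summable fun n : ℕ => sTerm x y n + y * (y + 1) ^ 3 / 4 *
      (sTerm x y n / ((x + y + n) ^ 2 * (x + y + n + 1) ^ 2)) := by
    simp only [sTerm.div_eq_shift_div]
    exact h.add ((h₂.div_const _).mul_left _)
  have htelescope := hsum.tsum_eq_of_eq_sub_succ (sTerm.add_mul_div_eq_sub_succ hxy)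
    (sTerm.tendsto_mul_telescopingFactor h)
  simp only [sTerm.div_eq_shift_div, h.tsum_add ((h₂.div_const _).mul_left _), tsum_mul_left,
    tsum_div_const, ← s_eq_tsum_sTerm, sTerm.zero, one_mul, Nat.cast_zero, add_zero] at htelescope
  have hxy₀ : x + y ≠ 0 := by simpa using hxy 0
  have hxy₁ : x + y + 1 ≠ 0 := by simpa using hxy 1
  rw [eq_sub_of_add_eq htelescope, telescopingFactor]
  field_simp
  ring

theorem stmt_14_general (x y : ℝ) (hxy : ∀ k : ℕ, x + y + k ≠ 0)
    (h1 : Summable fun n : ℕ => (-1 : ℝ) ^ n * (poch x n) ^ 2 / (poch (x + y) n) ^ 2)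
    (h3 : Summable fun n : ℕ =>
      (-1 : ℝ) ^ n * (poch x n) ^ 2 / (poch (x + (y + 2)) n) ^ 2) :
    s x y = 1 - x ^ 2 / (x + y) ^ 2 * s (x + 1) y
      ∧ s x y = (2 * x ^ 2 + 6 * x * y + 5 * y ^ 2 + y) / (4 * (x + y) ^ 2)
          - y * (y + 1) ^ 3 / (4 * (x + y) ^ 2 * (x + y + 1) ^ 2) * s x (y + 2) :=
  ⟨s_eq_one_sub x y h1, s_eq_sub_mul_s_add_two x y hxy h1 h3⟩

/-- The two ₃F₂(−1) recurrences of Theorem 6. -/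
theorem stmt_14 (x y : ℝ) (hxy : ∀ k : ℕ, x + y + k ≠ 0)
    (h1 : Summable fun n : ℕ => (-1 : ℝ) ^ n * (poch x n) ^ 2 / (poch (x + y) n) ^ 2)
    (h2 : Summable fun n : ℕ =>
      (-1 : ℝ) ^ n * (poch (x + 1) n) ^ 2 / (poch (x + 1 + y) n) ^ 2)
    (h3 : Summable fun n : ℕ =>
      (-1 : ℝ) ^ n * (poch x n) ^ 2 / (poch (x + (y + 2)) n) ^ 2) :
    s x y = 1 - x ^ 2 / (x + y) ^ 2 * s (x + 1) y
      ∧ s x y = (2 * x ^ 2 + 6 * x * y + 5 * y ^ 2 + y) / (4 * (x + y) ^ 2)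
          - y * (y + 1) ^ 3 / (4 * (x + y) ^ 2 * (x + y + 1) ^ 2) * s x (y + 2) :=
  stmt_14_general x y hxy h1 h3
end
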